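/- Let H = (V,H) be a boolean representable simplicial complex and τ ⊆ η an equivalence relation on V. Then the lattice of flats of H is isomorphic (as a lattice ordered by inclusion) to the lattice of flats of the quotient complex H/τ, via F ↦ Fφ⁻¹ where φ: V → V/τ is the projection. -/

import Mathlib

open scoped Classical

variable {V : Type}

def IsSC (faces : Set (Finset V)) : Prop :=
  (∀ v : V, ({v} : Finset V) ∈ faces) ∧
    ∀ ⦃X Y : Finset V⦄, X ∈ faces → Y ⊆ X → Y ∈ faces

def IsFlat (faces : Set (Finset V)) (F : Set V) : Prop :=
  ∀ I ∈ faces, (I : Set V) ⊆ F → ∀ p ∉ F, insert p I ∈ faces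

def cl (faces : Set (Finset V)) (X : Set V) : Set V :=
  ⋂₀ {F : Set V | IsFlat faces F ∧ X ⊆ F}

def BRep (faces : Set (Finset V)) : Prop :=
  ∀ X ∈ faces, ∃ (k : ℕ) (F : Fin (k + 1) → Set V) (x : Fin k → V),
    (∀ i, IsFlat faces (F i)) ∧ StrictMono F ∧ Function.Injective x ∧
    (∀ i : Fin k, x i ∈ F i.succ \ F i.castSucc) ∧
    X = Finset.image x Finset.univ

def skel (faces : Set (Finset V)) : SimpleGraph V where
  Adj p q := p ≠ q ∧ ({p, q} : Finset V) ∈ faces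
  symm := by
    constructor
    rintro p q ⟨h1, h2⟩
    exact ⟨h1.symm, by rwa [Finset.pair_comm]⟩
  loopless := by constructor; rintro p ⟨h, _⟩; exact h rfl

def flatGraph (faces : Set (Finset V)) : SimpleGraph V where
  Adj p q := p ≠ q ∧ cl faces {p, q} ≠ Set.univ
  symm := by
    constructor
    rintro p q ⟨h1, h2⟩
    exact ⟨h1.symm, by rwa [Set.pair_comm]⟩
  loopless := by constructor; rintro p ⟨h, _⟩; exact h rfl

def quotFaces (faces : Set (Finset V)) (τ : Setoid V) :
    Set (Finset (Quotient τ)) :=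
  {Y | ∃ X ∈ faces, Y = X.image (Quotient.mk τ)}

/-!
Every face of a boolean representable complex is a transversal `x₀, …, x_{k-1}` of a chain of
flats `F₀ ⊂ ⋯ ⊂ F_k`, with `xᵢ ∈ F_{i+1} \ Fᵢ`, and conversely every such transversal is a face.
Flats are unions of `η`-classes, so the elements of a face lie in distinct `η`-classes, and any
set with at most as many elements that meets every `η`-class met by a face is again a face.
Hence `φ` is injective on faces, flats of `H` are `τ`-saturated, and the flat condition passes
in both directions between a saturated set `F ⊆ V` and its image `Fφ ⊆ V/τ`.
-/

def Function.Surjective.preimageOrderIso {α β : Type*} {f : α → β} (hf : Function.Surjective f)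
    {P : Set β → Prop} {Q : Set α → Prop} (hPQ : ∀ G, P G → Q (f ⁻¹' G))
    (hQP : ∀ F, Q F → P (f '' F)) (hsat : ∀ F, Q F → f ⁻¹' (f '' F) = F) :
    {G // P G} ≃o {F // Q F} where
  toFun G := ⟨f ⁻¹' G, hPQ G G.2⟩
  invFun F := ⟨f '' F, hQP F F.2⟩
  left_inv G := Subtype.ext (Set.image_preimage_eq G hf)
  right_inv F := Subtype.ext (hsat F F.2)
  map_rel_iff' := hf.preimage_subset_preimage_iff

section Flats

variable {faces : Set (Finset V)}

lemma subset_cl (X : Set V) : X ⊆ cl faces X := fun _ ha _ hF => hF.2 ha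

lemma cl_subset_of_isFlat {F X : Set V} (hF : IsFlat faces F) (h : X ⊆ F) : cl faces X ⊆ F :=
  fun _ ha => ha F ⟨hF, h⟩

lemma IsFlat.mem_iff_of_cl_eq {F : Set V} (hF : IsFlat faces F) {a b : V}
    (hab : cl faces {a} = cl faces {b}) : a ∈ F ↔ b ∈ F := by
  have key : ∀ {a b : V}, cl faces {a} = cl faces {b} → a ∈ F → b ∈ F := fun hab ha =>
    cl_subset_of_isFlat hF (Set.singleton_subset_iff.2 ha) (hab ▸ subset_cl _ rfl)
  exact ⟨key hab, key hab.symm⟩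

lemma image_mem_of_chain (hempty : ∅ ∈ faces) :
    ∀ {k : ℕ} (F : Fin (k + 1) → Set V) (x : Fin k → V), (∀ i, IsFlat faces (F i)) →
      Monotone F → (∀ i, x i ∈ F i.succ \ F i.castSucc) → Finset.univ.image x ∈ faces
  | 0, _, _, _, _, _ => by simpa using hempty
  | k + 1, F, x, hF, hmono, hx => by
    have hprefix : Finset.univ.image (x ∘ Fin.castSucc) ∈ faces :=
      image_mem_of_chain hempty (F ∘ Fin.castSucc) (x ∘ Fin.castSucc) (fun _ => hF _)
        (hmono.comp Fin.strictMono_castSucc.monotone) fun i => by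
          simpa only [Function.comp, ← Fin.succ_castSucc] using hx i.castSucc
    have hsub : (↑(Finset.univ.image (x ∘ Fin.castSucc)) : Set V) ⊆ F (Fin.last k).castSucc := by
      intro v hv
      obtain ⟨i, -, rfl⟩ := Finset.mem_image.1 hv
      exact hmono (Fin.succ_le_castSucc_iff.2 (Fin.castSucc_lt_last i)) (hx i.castSucc).1
    have hsplit : Finset.univ.image x =
        insert (x (Fin.last k)) (Finset.univ.image (x ∘ Fin.castSucc)) := by
      ext v
      simp only [Finset.mem_image, Finset.mem_univ, true_and, Finset.mem_insert, Function.comp,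
        Fin.exists_fin_succ']
      tauto
    rw [hsplit]
    exact hF _ _ hprefix hsub _ (hx (Fin.last k)).2

lemma BRep.injOn_cl (hbr : BRep faces) {X : Finset V} (hX : X ∈ faces) :
    Set.InjOn (fun a => cl faces {a}) X := by
  obtain ⟨k, F, x, hF, hmono, -, hx, rfl⟩ := hbr X hX
  rw [Finset.coe_image, Finset.coe_univ, Set.image_univ]
  refine Function.Injective.injOn_range (Function.Injective.of_lt_imp_ne fun i j hij hcl => ?_)
  have hxi : x i ∈ F j.castSucc := hmono.monotone (Fin.succ_le_castSucc_iff.2 hij) (hx i).1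
  exact (hx j).2 (((hF _).mem_iff_of_cl_eq hcl).1 hxi)

lemma BRep.mem_of_cl_cover (hempty : ∅ ∈ faces) (hbr : BRep faces) {X Y : Finset V}
    (hX : X ∈ faces) (hcover : ∀ a ∈ X, ∃ b ∈ Y, cl faces {b} = cl faces {a})
    (hcard : Y.card ≤ X.card) : Y ∈ faces := by
  obtain ⟨k, F, x, hF, hmono, hxinj, hx, rfl⟩ := hbr X hX
  choose y hyY hycl using fun i => hcover (x i) (Finset.mem_image_of_mem _ (Finset.mem_univ i))
  have hy : ∀ i, y i ∈ F i.succ \ F i.castSucc := fun i => by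
    rw [Set.mem_sdiff, (hF _).mem_iff_of_cl_eq (hycl i), (hF _).mem_iff_of_cl_eq (hycl i)]
    exact hx i
  have hyinj : Function.Injective y := fun i j hij =>
    hxinj <| hbr.injOn_cl hX (Finset.mem_image_of_mem _ (Finset.mem_univ i))
      (Finset.mem_image_of_mem _ (Finset.mem_univ j)) (by simp only [← hycl i, ← hycl j, hij])
  have hsub : Finset.univ.image y ⊆ Y := Finset.image_subset_iff.2 fun i _ => hyY i
  have hcard' : Y.card ≤ (Finset.univ.image y).card := by
    rwa [Finset.card_image_of_injective _ hyinj, ← Finset.card_image_of_injective _ hxinj]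
  rw [← Finset.eq_of_subset_of_card_le hsub hcard']
  exact image_mem_of_chain hempty F y hF hmono.monotone hy

variable {τ : Setoid V}

lemma IsFlat.preimage_image_mk (hτ : ∀ a b : V, τ.r a b → cl faces {a} = cl faces {b})
    {F : Set V} (hF : IsFlat faces F) :
    Quotient.mk τ ⁻¹' (Quotient.mk τ '' F) = F := by
  refine (Set.subset_preimage_image _ _).antisymm' ?_
  rintro a ⟨b, hb, hba⟩
  exact (hF.mem_iff_of_cl_eq (hτ b a (Quotient.exact hba))).1 hb

lemma IsFlat.image_mk (hτ : ∀ a b : V, τ.r a b → cl faces {a} = cl faces {b})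
    {F : Set V} (hF : IsFlat faces F) :
    IsFlat (quotFaces faces τ) (Quotient.mk τ '' F) := by
  rintro _ ⟨X, hX, rfl⟩ hXF q hq
  obtain ⟨p, rfl⟩ := Quotient.exists_rep q
  have hXF' : (X : Set V) ⊆ F := by
    rw [← hF.preimage_image_mk hτ, ← Set.image_subset_iff, ← Finset.coe_image]
    exact hXF
  refine ⟨insert p X, hF X hX hXF' p fun hp => hq ⟨p, hp, rfl⟩, ?_⟩
  ext; simp

lemma IsFlat.preimage_mk (hτ : ∀ a b : V, τ.r a b → cl faces {a} = cl faces {b})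
    (hdown : ∀ ⦃X Y : Finset V⦄, X ∈ faces → Y ⊆ X → Y ∈ faces)
    (hbr : BRep faces) {G : Set (Quotient τ)} (hG : IsFlat (quotFaces faces τ) G) :
    IsFlat faces (Quotient.mk τ ⁻¹' G) := by
  intro I hI hIG p hp
  have hIG' : (↑(I.image (Quotient.mk τ)) : Set (Quotient τ)) ⊆ G := by
    rwa [Finset.coe_image, Set.image_subset_iff]
  obtain ⟨X, hX, hXI⟩ := hG _ ⟨I, hI, rfl⟩ hIG' _ hp
  have hpI : p ∉ I := fun h => hp (hIG h)
  have hinj : Set.InjOn (Quotient.mk τ) ↑(insert p I) := by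
    rw [Finset.coe_insert, Set.injOn_insert hpI]
    refine ⟨fun a ha b hb hab => hbr.injOn_cl hI ha hb (hτ a b (Quotient.exact hab)), ?_⟩
    exact fun h => hp (hIG' (by simpa using h))
  have hXI' : (insert p I).image (Quotient.mk τ) = X.image (Quotient.mk τ) := by
    rw [← hXI]; ext; simp
  refine hbr.mem_of_cl_cover (hdown hI (Finset.empty_subset _)) hX (fun a ha => ?_) ?_
  · obtain ⟨b, hb, hba⟩ := Finset.mem_image.1 (hXI' ▸ Finset.mem_image_of_mem _ ha)
    exact ⟨b, hb, hτ b a (Quotient.exact hba)⟩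
  · calc (insert p I).card = ((insert p I).image (Quotient.mk τ)).card :=
          (Finset.card_image_of_injOn hinj).symm
      _ = (X.image (Quotient.mk τ)).card := by rw [hXI']
      _ ≤ X.card := Finset.card_image_le

end Flats

theorem flat_lattices_iso_general
    {faces : Set (Finset V)} (hsc : IsSC faces) (hbr : BRep faces)
    (τ : Setoid V) (hτ : ∀ a b : V, τ.r a b → cl faces {a} = cl faces {b}) :
    ∃ e : {G : Set (Quotient τ) // IsFlat (quotFaces faces τ) G} ≃o
        {F : Set V // IsFlat faces F},
      ∀ G : {G : Set (Quotient τ) // IsFlat (quotFaces faces τ) G},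
        (e G : Set V) = Quotient.mk τ ⁻¹' (G : Set (Quotient τ)) :=
  ⟨Quotient.mk_surjective.preimageOrderIso (fun _ hG => hG.preimage_mk hτ hsc.2 hbr)
    (fun _ hF => hF.image_mk hτ) (fun _ hF => hF.preimage_image_mk hτ), fun _ => rfl⟩

theorem flat_lattices_iso [Fintype V] [Nonempty V]
    {faces : Set (Finset V)} (hsc : IsSC faces) (hbr : BRep faces)
    (τ : Setoid V) (hτ : ∀ a b : V, τ.r a b → cl faces {a} = cl faces {b}) :
    ∃ e : {G : Set (Quotient τ) // IsFlat (quotFaces faces τ) G} ≃o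
        {F : Set V // IsFlat faces F},
      ∀ G : {G : Set (Quotient τ) // IsFlat (quotFaces faces τ) G},
        (e G : Set V) = Quotient.mk τ ⁻¹' (G : Set (Quotient τ)) :=
  flat_lattices_iso_general hsc hbr τ hτ
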